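/- Let e₁, …, e_n be independent real random variables with E[e_i] = 0 and E[e_i²] ≤ σ². Let (a_{ik})_{1≤i≤n, 1≤k≤n} be real numbers with (1/n)Σ_{i=1}^n a_{ik}² = 1 for each k, and let ρ₁ ≤ … ≤ ρ_n be positive reals. Then E[ sup over (v_k) ∈ ℝ^n, not all zero, of ((1/n)Σ_i e_i Σ_k v_k a_{ik})² / Σ_k (1+λρ_k)v_k² ] ≤ (σ²/n) Σ_{k=1}^n (1 + λρ_k)^{−1} for every λ > 0. -/

import Mathlib

/-!
Writing `b k = ∑ i, a i k * e i`, the quantity under the supremum is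
`(n⁻¹ ∑ k, v k * b k)² / ∑ k, (1 + λρ_k) v_k²`, whose supremum over `v ≠ 0` is
`n⁻² ∑ k, b k² / (1 + λρ_k)` by Cauchy–Schwarz (attained at `v k = b k / (1 + λρ_k)`).
For independent centred noises `E[b k²] = ∑ i, a i k² E[e i²] ≤ σ² n`, which gives the bound.
-/

open MeasureTheory ProbabilityTheory Finset

theorem iSup_sq_sum_mul_div_sum_mul_sq {ι : Type*} [Fintype ι] (c : ι → ℝ) {d : ι → ℝ}
    (hd : ∀ k, 0 < d k) :
    ⨆ v : {v : ι → ℝ // v ≠ 0}, (∑ k, v.1 k * c k) ^ 2 / ∑ k, d k * v.1 k ^ 2 =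
      ∑ k, c k ^ 2 / d k := by
  have hT : 0 ≤ ∑ k, c k ^ 2 / d k := sum_nonneg fun k _ => div_nonneg (sq_nonneg _) (hd k).le
  -- Cauchy–Schwarz with `(v k * c k)² = (d k * v k²) * (c k² / d k)`
  have bound (v : ι → ℝ) :
      (∑ k, v k * c k) ^ 2 / ∑ k, d k * v k ^ 2 ≤ ∑ k, c k ^ 2 / d k := by
    refine div_le_of_le_mul₀ (sum_nonneg fun k _ => by have := (hd k).le; positivity) hT ?_
    rw [mul_comm]
    refine sum_sq_le_sum_mul_sum_of_sq_le_mul _ (fun k _ => by have := (hd k).le; positivity)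
      (fun k _ => div_nonneg (sq_nonneg _) (hd k).le) fun k _ => le_of_eq ?_
    field_simp [(hd k).ne']
  refine le_antisymm (Real.iSup_le (fun v => bound v.1) hT) ?_
  by_cases hc : c = 0
  · subst hc
    simp
  · have hv : (fun k => c k / d k) ≠ 0 := fun h => hc <| funext fun k => by
      simpa [(hd k).ne'] using congrFun h k
    refine le_ciSup_of_le ⟨_, Set.forall_mem_range.2 fun v => bound v.1⟩ ⟨_, hv⟩ (le_of_eq ?_)
    have hTpos : 0 < ∑ k, c k ^ 2 / d k := by
      obtain ⟨k, hk⟩ := Function.ne_iff.mp hc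
      exact sum_pos' (fun k _ => div_nonneg (sq_nonneg _) (hd k).le)
        ⟨k, mem_univ _, div_pos (by have : c k ≠ 0 := hk; positivity) (hd k)⟩
    have hnum : ∑ k, c k / d k * c k = ∑ k, c k ^ 2 / d k :=
      sum_congr rfl fun k _ => by ring
    have hden : ∑ k, d k * (c k / d k) ^ 2 = ∑ k, c k ^ 2 / d k :=
      sum_congr rfl fun k _ => by field_simp [(hd k).ne']
    simp only [hnum, hden]
    field_simp

theorem iSup_sq_sum_mul_sum_div_sum_mul_sq {ι κ : Type*} [Fintype ι] [Fintype κ] (t : ℝ)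
    (x : ι → ℝ) (a : ι → κ → ℝ) {d : κ → ℝ} (hd : ∀ k, 0 < d k) :
    ⨆ v : {v : κ → ℝ // v ≠ 0}, (t * ∑ i, x i * ∑ k, v.1 k * a i k) ^ 2 /
        ∑ k, d k * v.1 k ^ 2 =
      t ^ 2 * ∑ k, (∑ i, a i k * x i) ^ 2 / d k := by
  rw [← iSup_sq_sum_mul_div_sum_mul_sq _ hd, Real.mul_iSup_of_nonneg (sq_nonneg t)]
  refine iSup_congr fun v => ?_
  have hswap : ∑ i, x i * ∑ k, v.1 k * a i k = ∑ k, v.1 k * ∑ i, a i k * x i := by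
    simp only [mul_sum]
    rw [sum_comm]
    exact sum_congr rfl fun _ _ => sum_congr rfl fun _ _ => by ring
  rw [hswap, mul_pow, mul_div_assoc]

theorem integrable_of_integrable_finsetSum_of_nonneg {α ι : Type*} [MeasurableSpace α]
    {μ : Measure α} {s : Finset ι} {f : ι → α → ℝ} (h : Integrable (fun x => ∑ i ∈ s, f i x) μ)
    (hf : ∀ i ∈ s, 0 ≤ f i) (hfm : ∀ i ∈ s, AEStronglyMeasurable (f i) μ) {i : ι} (hi : i ∈ s) :
    Integrable (f i) μ :=
  h.mono_nonneg (hfm i hi) (ae_of_all _ (hf i hi))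
    (ae_of_all _ fun x => single_le_sum (fun j hj => hf j hj x) hi)

section Independence

variable {Ω : Type*} [MeasurableSpace Ω] {μ : Measure Ω} [IsProbabilityMeasure μ]

theorem memLp_of_indepFun_of_memLp_add {p : ENNReal} (hp0 : p ≠ 0) (hptop : p ≠ ⊤)
    {X Y : Ω → ℝ} (hX : Measurable X) (hY : Measurable Y)
    (hXY : IndepFun X Y μ) (h : MemLp (X + Y) p μ) : MemLp X p μ := by
  have hprod : MemLp (fun q : ℝ × ℝ => q.1 + q.2) p ((μ.map X).prod (μ.map Y)) := by
    rw [← hXY.map_prod_eq_prod_map_map hX.aemeasurable hY.aemeasurable,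
      memLp_map_measure_iff (by fun_prop) (hX.prodMk hY).aemeasurable]
    exact h
  have := Measure.isProbabilityMeasure_map (μ := μ) hY.aemeasurable
  -- Fubini: some translate `x ↦ x + y` lies in `Lp` of the law of `X`.
  obtain ⟨y, hy⟩ :=
    (((integrable_norm_rpow_iff (by fun_prop) hp0 hptop).2 hprod).prod_left_ae).exists
  have hshift : MemLp (fun x : ℝ => x + y) p (μ.map X) :=
    (integrable_norm_rpow_iff (by fun_prop) hp0 hptop).1 hy
  have hid : MemLp id p (μ.map X) := by
    convert hshift.sub (memLp_const y)
    ext x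
    simp
  exact (memLp_map_measure_iff (by fun_prop) hX.aemeasurable).1 hid

theorem memLp_of_iIndepFun_of_memLp_sum {p : ENNReal} (hp0 : p ≠ 0) (hptop : p ≠ ⊤)
    {ι : Type*} [Fintype ι] {X : ι → Ω → ℝ} (hX : ∀ i, Measurable (X i))
    (hindep : iIndepFun X μ) (hsum : MemLp (∑ i, X i) p μ) (i : ι) : MemLp (X i) p μ := by
  classical
  refine memLp_of_indepFun_of_memLp_add hp0 hptop (hX i) (by fun_prop)
    (hindep.indepFun_finsetSum_of_notMem hX (Finset.notMem_erase i univ)).symm ?_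
  rwa [Finset.add_sum_erase _ _ (mem_univ i)]

theorem integral_sq_sum_of_indepFun {ι : Type*} [Fintype ι] {X : ι → Ω → ℝ}
    (hX : ∀ i, MemLp (X i) 2 μ) (hindep : Pairwise fun i j => IndepFun (X i) (X j) μ)
    (hmean : ∀ i, ∫ ω, X i ω ∂μ = 0) :
    ∫ ω, (∑ i, X i ω) ^ 2 ∂μ = ∑ i, ∫ ω, X i ω ^ 2 ∂μ := by
  have hsum : MemLp (∑ i, X i) 2 μ := memLp_finsetSum' _ fun i _ => hX i
  have hsum_mean : ∫ ω, (∑ i, X i) ω ∂μ = 0 := by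
    simp only [Finset.sum_apply]
    rw [integral_finsetSum _ fun i _ => (hX i).integrable one_le_two]
    exact sum_eq_zero fun i _ => hmean i
  have hvar := IndepFun.variance_sum (s := univ) (fun i _ => hX i)
    fun i _ j _ hij => hindep hij
  rw [variance_of_integral_eq_zero hsum.aemeasurable hsum_mean] at hvar
  simpa [variance_of_integral_eq_zero (hX _).aemeasurable (hmean _)] using hvar

/-- For `e i` outside `L²` the Bochner integral `∫ e i ^ 2` is `0`, so `hvar` does not give
square integrability: it is recovered for the summands from that of the sum, by independence. -/
theorem integral_sq_sum_mul_le_of_iIndepFun {ι : Type*} [Fintype ι] {e : ι → Ω → ℝ}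
    (hmeas : ∀ i, Measurable (e i)) (hindep : iIndepFun e μ) (hmean : ∀ i, ∫ ω, e i ω ∂μ = 0)
    {σ : ℝ} (hvar : ∀ i, ∫ ω, e i ω ^ 2 ∂μ ≤ σ ^ 2) (a : ι → ℝ)
    (hsum : MemLp (fun ω => ∑ i, a i * e i ω) 2 μ) :
    ∫ ω, (∑ i, a i * e i ω) ^ 2 ∂μ ≤ σ ^ 2 * ∑ i, a i ^ 2 := by
  have hindep' : iIndepFun (fun i ω => a i * e i ω) μ :=
    hindep.comp (fun i x => a i * x) fun i => measurable_const_mul _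
  have hLp : ∀ i, MemLp (fun ω => a i * e i ω) 2 μ :=
    memLp_of_iIndepFun_of_memLp_sum two_ne_zero ENNReal.ofNat_ne_top
      (fun i => (hmeas i).const_mul _) hindep' (by simpa only [← Finset.sum_fn] using hsum)
  rw [integral_sq_sum_of_indepFun hLp (fun i j hij => hindep'.indepFun hij)
    fun i => by rw [integral_const_mul, hmean, mul_zero], mul_sum]
  refine sum_le_sum fun i _ => ?_
  simp_rw [mul_pow]
  rw [integral_const_mul, mul_comm (σ ^ 2)]
  exact mul_le_mul_of_nonneg_left (hvar i) (sq_nonneg _)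

end Independence

theorem empirical_process_variance_bound_general
    {Ω : Type*} [MeasurableSpace Ω] (μ : Measure Ω) [IsProbabilityMeasure μ]
    (n : ℕ)
    (e : Fin n → Ω → ℝ)
    (hmeas : ∀ i, Measurable (e i))
    (hindep : iIndepFun e μ)
    (σ : ℝ)
    (hmean : ∀ i, ∫ ω, e i ω ∂μ = 0)
    (hvar : ∀ i, ∫ ω, (e i ω) ^ 2 ∂μ ≤ σ ^ 2)
    (a : Fin n → Fin n → ℝ)
    (hnorm : ∀ k, (1 / (n : ℝ)) * ∑ i, (a i k) ^ 2 = 1)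
    (ρ : Fin n → ℝ) (hρ : ∀ k, 0 < ρ k)
    (l : ℝ) (hl : 0 < l) :
    (∫ ω, (⨆ v : {v : Fin n → ℝ // v ≠ 0},
        ((1 / (n : ℝ)) * ∑ i, e i ω * ∑ k, v.1 k * a i k) ^ 2 /
          ∑ k, (1 + l * ρ k) * (v.1 k) ^ 2) ∂μ) ≤
      (σ ^ 2 / n) * ∑ k, (1 + l * ρ k)⁻¹ := by
  have hd : ∀ k, 0 < 1 + l * ρ k := fun k => by nlinarith [mul_pos hl (hρ k)]
  set b : Fin n → Ω → ℝ := fun k ω => ∑ i, a i k * e i ω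
  simp_rw [iSup_sq_sum_mul_sum_div_sum_mul_sq _ _ a hd]
  rw [integral_const_mul]
  by_cases hG : Integrable (fun ω => ∑ k, b k ω ^ 2 / (1 + l * ρ k)) μ
  · have hsq (k : Fin n) : Integrable (fun ω => b k ω ^ 2) μ := by
      have := integrable_of_integrable_finsetSum_of_nonneg hG
        (fun j _ ω => div_nonneg (sq_nonneg (b j ω)) (hd j).le) (fun j _ => by fun_prop)
        (mem_univ k)
      simpa [div_eq_mul_inv, integrable_mul_const_iff, (hd k).ne'] using this
    have hmom (k : Fin n) : ∫ ω, b k ω ^ 2 ∂μ ≤ σ ^ 2 * ∑ i, a i k ^ 2 :=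
      integral_sq_sum_mul_le_of_iIndepFun hmeas hindep hmean hvar _
        ((memLp_two_iff_integrable_sq (by fun_prop)).2 (hsq k))
    rw [integral_finsetSum _ fun k _ => (hsq k).div_const _]
    calc (1 / (n : ℝ)) ^ 2 * ∑ k, ∫ ω, b k ω ^ 2 / (1 + l * ρ k) ∂μ
        = (1 / (n : ℝ)) ^ 2 * ∑ k, (∫ ω, b k ω ^ 2 ∂μ) / (1 + l * ρ k) := by
          simp_rw [integral_div]
      _ ≤ (1 / (n : ℝ)) ^ 2 * ∑ k, σ ^ 2 * (∑ i, a i k ^ 2) / (1 + l * ρ k) := by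
          gcongr with k
          · exact (hd k).le
          · exact hmom k
      _ = σ ^ 2 / n * ∑ k, (1 / (n : ℝ) * ∑ i, a i k ^ 2) * (1 + l * ρ k)⁻¹ := by
          rw [mul_sum, mul_sum]
          exact sum_congr rfl fun k _ => by ring
      _ = σ ^ 2 / n * ∑ k, (1 + l * ρ k)⁻¹ := by simp only [hnorm, one_mul]
  · rw [integral_undef hG, mul_zero]
    exact mul_nonneg (by positivity) (sum_nonneg fun k _ => (inv_pos.2 (hd k)).le)

/-- Finite-dimensional variance bound for the empirical process: with
independent centered noises with variance at most `σ²`, normalized design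
values `a i k` and positive weights `ρ k`,
`E[sup_v ((e, Σ_k v_k a_{·k})_n)² / Σ_k (1+λρ_k) v_k²] ≤ (σ²/n) Σ_k (1+λρ_k)⁻¹`. -/
theorem empirical_process_variance_bound
    {Ω : Type*} [MeasurableSpace Ω] (μ : Measure Ω) [IsProbabilityMeasure μ]
    (n : ℕ) (hn : 0 < n)
    (e : Fin n → Ω → ℝ)
    (hmeas : ∀ i, Measurable (e i))
    (hindep : iIndepFun e μ)
    (σ : ℝ) (hσ : 0 < σ)
    (hmean : ∀ i, ∫ ω, e i ω ∂μ = 0)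
    (hvar : ∀ i, ∫ ω, (e i ω) ^ 2 ∂μ ≤ σ ^ 2)
    (a : Fin n → Fin n → ℝ)
    (hnorm : ∀ k, (1 / (n : ℝ)) * ∑ i, (a i k) ^ 2 = 1)
    (ρ : Fin n → ℝ) (hρ : ∀ k, 0 < ρ k) (hρmono : Monotone ρ)
    (l : ℝ) (hl : 0 < l) :
    (∫ ω, (⨆ v : {v : Fin n → ℝ // v ≠ 0},
        ((1 / (n : ℝ)) * ∑ i, e i ω * ∑ k, v.1 k * a i k) ^ 2 /
          ∑ k, (1 + l * ρ k) * (v.1 k) ^ 2) ∂μ) ≤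
      (σ ^ 2 / n) * ∑ k, (1 + l * ρ k)⁻¹ :=
  empirical_process_variance_bound_general μ n e hmeas hindep σ hmean hvar a hnorm ρ hρ l hl
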